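/- Let n ≥ 1, ε ∈ (0,1), p ≥ 1 a real number, and let b ∈ ℝ^n be a nonzero vector. Set M = max_{1≤i≤n} |b_i|, and define x ∈ ℝ^n by: x_i = 0 if b_i = 0; otherwise x_i = sgn(b_i) · (1+ε)^{⌊log_{1+ε} |b_i|⌋} unless |x_i| ≤ M/n^5, in which case x_i = 0. Then ‖b − x‖_p ≤ ε·‖b‖_p + 2·n^{1/p}·M/n^5. In particular, each nonzero entry satisfies |b_i − x_i| ≤ ε·|b_i|, and each truncated entry satisfies |b_i| ≤ (1+ε)·M/n^5 ≤ 2M/n^5. -/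

import Mathlib

/-!
Rounding `t ≠ 0` down in magnitude to `r = (1+ε)^⌊log_{1+ε} |t|⌋` gives `r ≤ |t| ≤ (1+ε) r`,
so the rounding error `|t| - r` is at most `ε r ≤ ε|t|`, and a truncated entry, whose `r` is at
most `T = M/n^5`, has `|t| ≤ (1+ε)T ≤ 2T`. Hence `|b_i - x_i| ≤ ε|b_i| + 2T` entrywise, and
Minkowski's inequality splits the `ℓ_p` norm of this bound into `ε‖b‖_p + n^{1/p}·2T`.
-/

/-- The ℓ_p norm of a vector in ℝ^n, for real `p ≥ 1`:
`‖y‖_p = (∑ |y_i|^p)^{1/p}` (real exponents). -/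
noncomputable def lpNorm {n : ℕ} (p : ℝ) (y : Fin n → ℝ) : ℝ :=
  (∑ i, |y i| ^ p) ^ (1 / p)

open Real

namespace Real

theorem sign_mul_abs (t : ℝ) : sign t * |t| = t := by
  rcases lt_trichotomy t 0 with h | rfl | h
  · rw [sign_of_neg h, abs_of_neg h]; ring
  · simp
  · rw [sign_of_pos h, abs_of_pos h, one_mul]

theorem abs_sign_of_ne_zero {t : ℝ} (ht : t ≠ 0) : |sign t| = 1 := by
  rcases sign_apply_eq_of_ne_zero t ht with h | h <;> simp [h]

variable {c t : ℝ}

theorem zpow_floor_logb_le (hc : 1 < c) (ht : 0 < t) : c ^ ⌊logb c t⌋ ≤ t := by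
  rw [← rpow_intCast, ← le_logb_iff_rpow_le hc ht]
  exact Int.floor_le _

theorem lt_zpow_floor_logb_add_one (hc : 1 < c) (ht : 0 < t) : t < c ^ (⌊logb c t⌋ + 1) := by
  rw [← rpow_intCast, ← logb_lt_iff_lt_rpow hc ht]
  push_cast
  exact Int.lt_floor_add_one _

end Real

section lpNorm

variable {n : ℕ} {p : ℝ}

theorem lpNorm_le_lpNorm_of_abs_le {y z : Fin n → ℝ} (hp : 0 ≤ p) (h : ∀ i, |y i| ≤ |z i|) :
    lpNorm p y ≤ lpNorm p z := by
  have hsum : ∑ i, |y i| ^ p ≤ ∑ i, |z i| ^ p :=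
    Finset.sum_le_sum fun i _ => rpow_le_rpow (abs_nonneg _) (h i) hp
  exact rpow_le_rpow (by positivity) hsum (by positivity)

theorem lpNorm_add_le (hp : 1 ≤ p) (y z : Fin n → ℝ) :
    lpNorm p (y + z) ≤ lpNorm p y + lpNorm p z :=
  Lp_add_le Finset.univ y z hp

theorem lpNorm_smul (hp : p ≠ 0) (c : ℝ) (y : Fin n → ℝ) :
    lpNorm p (c • y) = |c| * lpNorm p y := by
  simp only [lpNorm, Pi.smul_apply, smul_eq_mul, abs_mul]
  simp_rw [mul_rpow (abs_nonneg c) (abs_nonneg _)]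
  rw [← Finset.mul_sum, mul_rpow (by positivity) (by positivity), ← rpow_mul (abs_nonneg c),
    mul_one_div_cancel hp, rpow_one]

theorem lpNorm_abs (y : Fin n → ℝ) : lpNorm p (fun i => |y i|) = lpNorm p y := by
  simp only [lpNorm, abs_abs]

theorem lpNorm_const (hp : p ≠ 0) (c : ℝ) :
    lpNorm p (fun _ : Fin n => c) = (n : ℝ) ^ (1 / p) * |c| := by
  rw [lpNorm, Finset.sum_const, Finset.card_univ, Fintype.card_fin, nsmul_eq_mul,
    mul_rpow (Nat.cast_nonneg n) (by positivity), ← rpow_mul (abs_nonneg c),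
    mul_one_div_cancel hp, rpow_one]

end lpNorm

noncomputable def roundPow (ε t : ℝ) : ℝ :=
  Real.sign t * (1 + ε) ^ ⌊Real.logb (1 + ε) |t|⌋

noncomputable def roundTrunc (ε T t : ℝ) : ℝ :=
  if t = 0 then 0 else if |roundPow ε t| ≤ T then 0 else roundPow ε t

section Rounding

variable {ε T t : ℝ}

theorem abs_roundPow_of_ne_zero (hε : 0 < ε) (ht : t ≠ 0) :
    |roundPow ε t| = (1 + ε) ^ ⌊logb (1 + ε) |t|⌋ := by
  rw [roundPow, abs_mul, abs_sign_of_ne_zero ht, one_mul, abs_of_pos (by positivity)]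

theorem abs_roundPow_le_abs (hε : 0 < ε) (t : ℝ) : |roundPow ε t| ≤ |t| := by
  rcases eq_or_ne t 0 with rfl | ht
  · simp [roundPow]
  rw [abs_roundPow_of_ne_zero hε ht]
  exact zpow_floor_logb_le (by linarith) (abs_pos.2 ht)

theorem abs_le_mul_abs_roundPow (hε : 0 < ε) (t : ℝ) : |t| ≤ (1 + ε) * |roundPow ε t| := by
  rcases eq_or_ne t 0 with rfl | ht
  · simp [roundPow]
  rw [abs_roundPow_of_ne_zero hε ht, mul_comm, ← zpow_add_one₀ (by positivity)]
  exact (lt_zpow_floor_logb_add_one (c := 1 + ε) (by linarith) (abs_pos.2 ht)).le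

theorem abs_sub_roundPow (hε : 0 < ε) (t : ℝ) : |t - roundPow ε t| = |t| - |roundPow ε t| := by
  rcases eq_or_ne t 0 with rfl | ht
  · simp [roundPow]
  have hsub : t - roundPow ε t = sign t * (|t| - |roundPow ε t|) := by
    rw [abs_roundPow_of_ne_zero hε ht, mul_sub, sign_mul_abs, roundPow]
  rw [hsub, abs_mul, abs_sign_of_ne_zero ht, one_mul,
    abs_of_nonneg (sub_nonneg.2 (abs_roundPow_le_abs hε t))]

theorem abs_sub_roundPow_le (hε : 0 < ε) (t : ℝ) : |t - roundPow ε t| ≤ ε * |t| := by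
  have hup := abs_le_mul_abs_roundPow hε t
  have hdown := mul_le_mul_of_nonneg_left (abs_roundPow_le_abs hε t) hε.le
  rw [abs_sub_roundPow hε]
  linarith

theorem roundTrunc_eq_roundPow_of_ne_zero (h : roundTrunc ε T t ≠ 0) :
    roundTrunc ε T t = roundPow ε t := by
  simp only [roundTrunc] at h ⊢
  split_ifs at h ⊢ <;> first | rfl | exact absurd rfl h

theorem abs_le_of_roundTrunc_eq_zero (hε : 0 < ε) (ht : t ≠ 0) (h : roundTrunc ε T t = 0) :
    |t| ≤ (1 + ε) * T := by
  have hround : |roundPow ε t| ≤ T := by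
    by_contra hbig
    rw [roundTrunc, if_neg ht, if_neg hbig] at h
    have hpos : 0 < |roundPow ε t| := by rw [abs_roundPow_of_ne_zero hε ht]; positivity
    simp [h] at hpos
  exact (abs_le_mul_abs_roundPow hε t).trans (by gcongr)

theorem abs_sub_roundTrunc_le (hε : 0 < ε) (hT : 0 ≤ T) (t : ℝ) :
    |t - roundTrunc ε T t| ≤ ε * |t| + (1 + ε) * T := by
  have hεt : 0 ≤ ε * |t| := by positivity
  have hεT : 0 ≤ (1 + ε) * T := by positivity
  by_cases h : roundTrunc ε T t = 0
  · rcases eq_or_ne t 0 with rfl | ht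
    · simpa [h] using hεT
    · rw [h, sub_zero]
      linarith [abs_le_of_roundTrunc_eq_zero hε ht h]
  · rw [roundTrunc_eq_roundPow_of_ne_zero h]
    linarith [abs_sub_roundPow_le hε t]

end Rounding

theorem roundTrunc_error_bound_general (n : ℕ) (ε p : ℝ)
    (hε : ε ∈ Set.Ioo (0 : ℝ) 1) (hp : 1 ≤ p)
    (b : Fin n → ℝ)
    (M : ℝ) (hM : M = ⨆ i, |b i|)
    (x : Fin n → ℝ)
    (hx : ∀ i, x i =
      if b i = 0 then 0
      else if |Real.sign (b i) * (1 + ε) ^ ⌊Real.logb (1 + ε) |b i|⌋| ≤ M / (n : ℝ) ^ 5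
        then 0
        else Real.sign (b i) * (1 + ε) ^ ⌊Real.logb (1 + ε) |b i|⌋) :
    lpNorm p (b - x) ≤ ε * lpNorm p b + 2 * (n : ℝ) ^ (1 / p) * M / (n : ℝ) ^ 5 ∧
    (∀ i, x i ≠ 0 → |b i - x i| ≤ ε * |b i|) ∧
    (∀ i, b i ≠ 0 → x i = 0 →
      |b i| ≤ (1 + ε) * M / (n : ℝ) ^ 5 ∧ |b i| ≤ 2 * M / (n : ℝ) ^ 5) := by
  obtain ⟨hε0, hε1⟩ := hε
  set T := M / (n : ℝ) ^ 5
  have hT : 0 ≤ T := by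
    have hM0 : 0 ≤ M := hM ▸ Real.iSup_nonneg fun i => abs_nonneg (b i)
    positivity
  have hxb : ∀ i, x i = roundTrunc ε T (b i) := hx
  have hεT : (1 + ε) * T ≤ 2 * T := by gcongr; linarith
  have hentry (i : Fin n) : |(b - x) i| ≤ |ε * |b i| + 2 * T| := by
    have hbound : 0 ≤ ε * |b i| + 2 * T := by positivity
    rw [Pi.sub_apply, hxb i, abs_of_nonneg hbound]
    linarith [abs_sub_roundTrunc_le hε0 hT (b i)]
  refine ⟨?_, fun i hi => ?_, fun i hi hi0 => ?_⟩
  · calc lpNorm p (b - x)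
        ≤ lpNorm p (fun i => ε * |b i| + 2 * T) :=
          lpNorm_le_lpNorm_of_abs_le (by linarith) hentry
      _ ≤ lpNorm p (ε • fun i => |b i|) + lpNorm p (fun _ : Fin n => 2 * T) :=
          lpNorm_add_le hp _ _
      _ = ε * lpNorm p b + (n : ℝ) ^ (1 / p) * (2 * T) := by
          rw [lpNorm_smul (by linarith), lpNorm_abs, lpNorm_const (by linarith), abs_of_pos hε0,
            abs_of_nonneg (by positivity)]
      _ = ε * lpNorm p b + 2 * (n : ℝ) ^ (1 / p) * M / (n : ℝ) ^ 5 := by ring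
  · rw [hxb i] at hi ⊢
    rw [roundTrunc_eq_roundPow_of_ne_zero hi]
    exact abs_sub_roundPow_le hε0 (b i)
  · have hbi := abs_le_of_roundTrunc_eq_zero hε0 hi (hxb i ▸ hi0)
    rw [mul_div_assoc, mul_div_assoc]
    exact ⟨hbi, hbi.trans hεT⟩

/-- guarantee of the `RoundTrunc` procedure. With
`M = max_i |b_i|`, and `x` obtained from `b` by rounding each nonzero entry
down in magnitude to the nearest power of `1+ε` (keeping the sign), and
truncating to `0` any entry whose rounded magnitude is at most `M/n^5`,
one has `‖b − x‖_p ≤ ε·‖b‖_p + 2·n^{1/p}·M/n^5`; moreover each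
non-truncated (nonzero) entry satisfies `|b_i − x_i| ≤ ε·|b_i|` and each
truncated entry satisfies `|b_i| ≤ (1+ε)·M/n^5 ≤ 2M/n^5`. -/
theorem roundTrunc_error_bound (n : ℕ) (hn : 1 ≤ n) (ε p : ℝ)
    (hε : ε ∈ Set.Ioo (0 : ℝ) 1) (hp : 1 ≤ p)
    (b : Fin n → ℝ) (hb : b ≠ 0)
    (M : ℝ) (hM : M = ⨆ i, |b i|)
    (x : Fin n → ℝ)
    (hx : ∀ i, x i =
      if b i = 0 then 0
      else if |Real.sign (b i) * (1 + ε) ^ ⌊Real.logb (1 + ε) |b i|⌋| ≤ M / (n : ℝ) ^ 5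
        then 0
        else Real.sign (b i) * (1 + ε) ^ ⌊Real.logb (1 + ε) |b i|⌋) :
    lpNorm p (b - x) ≤ ε * lpNorm p b + 2 * (n : ℝ) ^ (1 / p) * M / (n : ℝ) ^ 5 ∧
    (∀ i, x i ≠ 0 → |b i - x i| ≤ ε * |b i|) ∧
    (∀ i, b i ≠ 0 → x i = 0 →
      |b i| ≤ (1 + ε) * M / (n : ℝ) ^ 5 ∧ |b i| ≤ 2 * M / (n : ℝ) ^ 5) :=
  roundTrunc_error_bound_general n ε p hε hp b M hM x hx
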